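/- arXiv:1207.0988 — 10 statements merged into one kernel-verified Lean document; each statement's English description precedes it below -/
import Mathlib

section
/- A finite conjunction of xor-constraints over GF(2) is unsatisfiable if and only if some subset of the constraints sums (over GF(2)) to the contradictory constraint 0 ≡ 1 (i.e., zero coefficient vector and parity 1). -/
/-! Satisfiability is the statement that the right-hand side `b` lies in the column space of the
coefficient matrix `M`. By duality over the field `GF(2)`, `b` lies outside it iff some row
combination `y` kills `M` but not `b`; a vector `y` over `GF(2)` is the indicator of the set of
constraints it selects, and `y ᵥ* M`, `y ⬝ᵥ b` are the sums of that subset. -/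

open Matrix Finset

theorem Matrix.exists_mulVec_eq_iff_forall_vecMul_eq_zero {ι V K : Type*} [Fintype ι] [Fintype V]
    [Field K] (M : Matrix ι V K) (b : ι → K) :
    (∃ x, M *ᵥ x = b) ↔ ∀ y, y ᵥ* M = 0 → y ⬝ᵥ b = 0 := by
  classical
  change b ∈ LinearMap.range M.mulVecLin ↔ _
  rw [← Subspace.forall_mem_dualAnnihilator_apply_eq_zero_iff]
  refine ((dotProductEquiv K ι).toEquiv.forall_congr fun y => imp_congr_left ?_).symm
  simp only [LinearEquiv.coe_toEquiv, Submodule.mem_dualAnnihilator, LinearMap.mem_range,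
    forall_exists_index, forall_apply_eq_imp_iff, mulVecLin_apply, dotProductEquiv_apply_apply,
    dotProduct_mulVec]
  exact dotProduct_eq_zero_iff.symm

section Indicator

variable {ι R : Type*} [DecidableEq ι] [Fintype ι]

theorem Matrix.ite_mem_dotProduct [NonAssocSemiring R] (S : Finset ι) (b : ι → R) :
    (fun i => if i ∈ S then 1 else 0) ⬝ᵥ b = ∑ i ∈ S, b i := by
  simp only [dotProduct, ite_mul, one_mul, zero_mul, sum_ite_mem, univ_inter]

theorem Matrix.ite_mem_vecMul {V : Type*} [NonAssocSemiring R] (S : Finset ι) (M : Matrix ι V R) :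
    (fun i => if i ∈ S then 1 else 0) ᵥ* M = fun v => ∑ i ∈ S, M i v :=
  funext fun v => ite_mem_dotProduct S fun i => M i v

theorem ZMod.exists_fun_two_iff_exists_finset {P : (ι → ZMod 2) → Prop} :
    (∃ y, P y) ↔ ∃ S : Finset ι, P fun i => if i ∈ S then 1 else 0 := by
  refine ⟨fun ⟨y, hy⟩ => ⟨univ.filter (y · = 1), ?_⟩, fun ⟨S, hS⟩ => ⟨_, hS⟩⟩
  convert hy using 2 with i
  have : ∀ a : ZMod 2, (if a = 1 then 1 else 0) = a := by decide
  simpa only [mem_filter, mem_univ, true_and] using this (y i)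

end Indicator

/-- A finite conjunction of xor-constraints over GF(2) is unsatisfiable iff some
subset of the constraints sums to the contradictory constraint `0 ≡ 1`. -/
theorem xor_unsat_iff_subset_sum {V ι : Type*} [Fintype V] [Fintype ι]
    (C : ι → (V → ZMod 2) × ZMod 2) :
    (¬ ∃ x : V → ZMod 2, ∀ i, ∑ v, (C i).1 v * x v = (C i).2) ↔
      ∃ S : Finset ι, (∀ v, ∑ i ∈ S, (C i).1 v = 0) ∧ (∑ i ∈ S, (C i).2 = 1) := by
  classical
  let M : Matrix ι V (ZMod 2) := Matrix.of fun i => (C i).1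
  have hsat : (∃ x : V → ZMod 2, ∀ i, ∑ v, (C i).1 v * x v = (C i).2) ↔
      ∃ x, M *ᵥ x = fun i => (C i).2 := by
    simp only [funext_iff, mulVec, dotProduct, M, of_apply]
  have hne_zero : ∀ a : ZMod 2, a ≠ 0 ↔ a = 1 := by decide
  rw [hsat, M.exists_mulVec_eq_iff_forall_vecMul_eq_zero, not_forall]
  simp only [Classical.not_imp, hne_zero]
  rw [ZMod.exists_fun_two_iff_exists_finset]
  simp only [ite_mem_vecMul, ite_mem_dotProduct, funext_iff, Pi.zero_apply, M, of_apply]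
end

section
/- Let ⟨E, τ⟩ be a propagation-saturated assigned tableau for a conjunction φ of xor-constraints. Then the formula φ together with the partial assignment τ (viewed as unit constraints x ≡ τ(x)) is satisfiable if and only if ⟨E, τ⟩ is consistent, i.e., no fully-assigned equation of E is violated by τ. -/
/-!
Any solution of the tableau that extends `τ` evaluates each fully assigned equation exactly as `τ`
does, so it cannot violate one. Conversely, take `τ` (with `0` for unassigned variables) on the
non-basic variables and let each basic variable be defined by its equation. Since right-hand sides
contain only non-basic variables this solves the tableau, and it still extends `τ`: an assigned basic
variable has a fully assigned equation by saturation, which consistency says `τ` already satisfies.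
-/

section Tableau

variable {V R : Type*}

theorem Option.getD_eq_of_extends {τ : V → Option R} {x : V → R}
    (hx : ∀ v c, τ v = some c → x v = c) {v : V} (hv : (τ v).isSome) (d : R) :
    (τ v).getD d = x v := by
  obtain ⟨c, hc⟩ := Option.isSome_iff_exists.mp hv
  rw [hc, Option.getD_some, hx v c hc]

variable [Fintype V] [Semiring R]

theorem Finset.sum_mul_congr_of_ne_zero {r x y : V → R} (h : ∀ v, r v ≠ 0 → x v = y v) :
    ∑ v, r v * x v = ∑ v, r v * y v := by
  refine Finset.sum_congr rfl fun v _ => ?_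
  by_cases hv : r v = 0
  · simp only [hv, zero_mul]
  · rw [h v hv]

def SatisfiesTableau (B : Finset V) (r : V → V → R) (p : V → R) (x : V → R) : Prop :=
  ∀ b ∈ B, x b = ∑ v, r b v * x v + p b

def TableauConsistent (B : Finset V) (r : V → V → R) (p : V → R) (τ : V → Option R) : Prop :=
  ∀ b ∈ B, ((τ b).isSome ∧ ∀ v, r b v ≠ 0 → (τ v).isSome) →
    (τ b).getD 0 = ∑ v, r b v * (τ v).getD 0 + p b

theorem tableauConsistent_of_extends {B : Finset V} {r : V → V → R} {p : V → R}
    {τ : V → Option R} {x : V → R} (hx : ∀ v c, τ v = some c → x v = c)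
    (hsat : SatisfiesTableau B r p x) : TableauConsistent B r p τ := by
  rintro b hb ⟨hbτ, hvτ⟩
  have hsum : ∑ v, r b v * (τ v).getD 0 = ∑ v, r b v * x v :=
    Finset.sum_mul_congr_of_ne_zero fun v hv => Option.getD_eq_of_extends hx (hvτ v hv) 0
  rw [hsum, Option.getD_eq_of_extends hx hbτ]
  exact hsat b hb

variable [DecidableEq V]

def tableauCompletion (B : Finset V) (r : V → V → R) (p : V → R) (y : V → R) : V → R :=
  fun v => if v ∈ B then ∑ w, r v w * y w + p v else y v

theorem satisfiesTableau_tableauCompletion {B : Finset V} {r : V → V → R}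
    (hnb : ∀ b ∈ B, ∀ b' ∈ B, r b b' = 0) (p y : V → R) :
    SatisfiesTableau B r p (tableauCompletion B r p y) := by
  intro b hb
  have hnonbasic : ∀ w, r b w ≠ 0 → y w = tableauCompletion B r p y w := fun w hw => by
    have hwB : w ∉ B := fun hwB => hw (hnb b hb w hwB)
    simp only [tableauCompletion, if_neg hwB]
  simp only [tableauCompletion, if_pos hb]
  rw [Finset.sum_mul_congr_of_ne_zero hnonbasic]
  rfl

theorem tableauCompletion_extends {B : Finset V} {r : V → V → R} {p : V → R}
    {τ : V → Option R} (hsatur : ∀ b ∈ B, ((τ b).isSome ↔ ∀ v, r b v ≠ 0 → (τ v).isSome))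
    (hcons : TableauConsistent B r p τ) (v : V) (c : R) (hc : τ v = some c) :
    tableauCompletion B r p (fun w => (τ w).getD 0) v = c := by
  have hv : (τ v).isSome := by simp only [hc, Option.isSome_some]
  by_cases hvB : v ∈ B
  · have hfull := hcons v hvB ⟨hv, (hsatur v hvB).mp hv⟩
    rw [hc, Option.getD_some] at hfull
    simp only [tableauCompletion, if_pos hvB, hfull]
  · simp only [tableauCompletion, if_neg hvB, hc, Option.getD_some]

end Tableau

/-- For a propagation-saturated assigned tableau `⟨E,τ⟩` for `φ`, the formula
`φ ∧ τ` is satisfiable iff `⟨E,τ⟩` is consistent (no fully-assigned equation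
is violated by `τ`). -/
theorem assigned_tableau_sat_iff_consistent {V ι : Type*} [Fintype V]
    (C : ι → (V → ZMod 2) × ZMod 2)
    (B : Finset V) (r : V → V → ZMod 2) (p : V → ZMod 2)
    (τ : V → Option (ZMod 2))
    (hnb : ∀ b ∈ B, ∀ b' ∈ B, r b b' = 0)
    (hequiv : ∀ x : V → ZMod 2,
      (∀ i, ∑ v, (C i).1 v * x v = (C i).2) ↔
        ∀ b ∈ B, x b = (∑ v, r b v * x v) + p b)
    (hsatur : ∀ b ∈ B, ((τ b).isSome ↔ ∀ v, r b v ≠ 0 → (τ v).isSome)) :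
    (∃ x : V → ZMod 2, (∀ v c, τ v = some c → x v = c) ∧
        (∀ i, ∑ v, (C i).1 v * x v = (C i).2)) ↔
      (∀ b ∈ B, ((τ b).isSome ∧ ∀ v, r b v ≠ 0 → (τ v).isSome) →
        (τ b).getD 0 = (∑ v, r b v * (τ v).getD 0) + p b) := by
  classical
  constructor
  · rintro ⟨x, hx, hsat⟩
    exact tableauConsistent_of_extends hx ((hequiv x).mp hsat)
  · intro hcons
    exact ⟨_, tableauCompletion_extends hsatur hcons,
      (hequiv _).mpr (satisfiesTableau_tableauCompletion hnb p _)⟩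
end

section
/- Let ⟨E, τ⟩ be a consistent, propagation-saturated assigned tableau for a conjunction φ of xor-constraints. Then for any variable y and value v ∈ GF(2), φ together with τ (as unit constraints) logically implies y ≡ v if and only if τ(y) is defined and equals v. -/
/-!
Fill every unassigned non-basic variable with an arbitrary default value and compute each basic
variable from its equation. Since no basic variable occurs on a right-hand side, this always
solves the tableau, and by saturation and consistency it extends `τ`. If `y` is unassigned it
depends on some free default: directly when `y` is non-basic, and otherwise through an
unassigned variable of its equation, which exists by saturation. Changing that default gives
two solutions extending `τ` that disagree on `y`.
-/

open Finset

section CanonicalExtension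

variable {V R : Type*} [Fintype V] [Ring R]

theorem sum_mul_getD_eq_of_isSome {r : V → V → R} {τ : V → Option R} {b : V}
    (hb : ∀ u, r b u ≠ 0 → (τ u).isSome) (f g : V → R) :
    ∑ u, r b u * (τ u).getD (f u) = ∑ u, r b u * (τ u).getD (g u) := by
  refine sum_congr rfl fun u _ => ?_
  by_cases hu : r b u = 0
  · simp [hu]
  · obtain ⟨a, ha⟩ := Option.isSome_iff_exists.mp (hb u hu)
    simp [ha]

variable [DecidableEq V] (B : Finset V) (r : V → V → R) (p : V → R) (τ : V → Option R)

def canonicalExtension (f : V → R) (w : V) : R :=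
  if w ∈ B then ∑ u, r w u * (τ u).getD (f u) + p w else (τ w).getD (f w)

variable {B r p τ}

theorem canonicalExtension_of_mem (f : V → R) {w : V} (hw : w ∈ B) :
    canonicalExtension B r p τ f w = ∑ u, r w u * (τ u).getD (f u) + p w :=
  if_pos hw

theorem canonicalExtension_of_notMem (f : V → R) {w : V} (hw : w ∉ B) :
    canonicalExtension B r p τ f w = (τ w).getD (f w) :=
  if_neg hw

theorem canonicalExtension_eq_of_eq_some
    (hsatur : ∀ b ∈ B, (τ b).isSome → ∀ v, r b v ≠ 0 → (τ v).isSome)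
    (hcons : ∀ b ∈ B, ((τ b).isSome ∧ ∀ v, r b v ≠ 0 → (τ v).isSome) →
      (τ b).getD 0 = (∑ v, r b v * (τ v).getD 0) + p b)
    (f : V → R) {w : V} {c : R} (hwc : τ w = some c) :
    canonicalExtension B r p τ f w = c := by
  by_cases hw : w ∈ B
  · have hsome : (τ w).isSome := by simp [hwc]
    have hsupp := hsatur w hw hsome
    have hc := hcons w hw ⟨hsome, hsupp⟩
    rw [hwc, Option.getD_some] at hc
    rw [canonicalExtension_of_mem f hw, sum_mul_getD_eq_of_isSome hsupp f fun _ => 0, hc]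
  · rw [canonicalExtension_of_notMem f hw, hwc, Option.getD_some]

theorem canonicalExtension_solves (hnb : ∀ b ∈ B, ∀ b' ∈ B, r b b' = 0) (f : V → R) :
    ∀ b ∈ B, canonicalExtension B r p τ f b =
      ∑ u, r b u * canonicalExtension B r p τ f u + p b := by
  intro b hb
  rw [canonicalExtension_of_mem f hb]
  congr 1
  refine sum_congr rfl fun u _ => ?_
  by_cases hu : u ∈ B
  · simp [hnb b hb u hu]
  · rw [canonicalExtension_of_notMem f hu]

theorem canonicalExtension_add_single_of_mem {y u : V} (hy : y ∈ B) (hu : τ u = none)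
    (f : V → R) (a : R) :
    canonicalExtension B r p τ (f + Pi.single u a) y =
      canonicalExtension B r p τ f y + r y u * a := by
  have hterm : ∀ w, r y w * (τ w).getD ((f + Pi.single u a : V → R) w) =
      r y w * (τ w).getD (f w) + (Pi.single u (r y u * a) : V → R) w := by
    intro w
    by_cases hwu : w = u
    · subst hwu
      simp [hu, mul_add]
    · simp [hwu]
  simp only [canonicalExtension_of_mem _ hy, hterm, sum_add_distrib, sum_pi_single',
    mem_univ, if_true]
  abel

theorem exists_canonicalExtension_ne [Nontrivial R]
    (hsatur : ∀ b ∈ B, (∀ v, r b v ≠ 0 → (τ v).isSome) → (τ b).isSome)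
    {y : V} (hy : τ y = none) :
    ∃ f g, canonicalExtension B r p τ f y ≠ canonicalExtension B r p τ g y := by
  by_cases hyB : y ∈ B
  · have hunassigned : ¬ ∀ u, r y u ≠ 0 → (τ u).isSome := by
      intro hsupp
      simpa [hy] using hsatur y hyB hsupp
    push Not at hunassigned
    obtain ⟨u, hru, hu⟩ := hunassigned
    refine ⟨0 + Pi.single u 1, 0, ?_⟩
    rw [canonicalExtension_add_single_of_mem hyB (by simpa using hu), mul_one]
    exact add_ne_left.mpr hru
  · refine ⟨0, 1, ?_⟩
    simp [canonicalExtension_of_notMem _ hyB, hy]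

end CanonicalExtension

/-- For a consistent, propagation-saturated assigned tableau `⟨E,τ⟩` for `φ`:
`φ ∧ τ ⊨ (y ≡ v)` iff `τ(y)` is defined and equals `v`. -/
theorem assigned_tableau_implied_literal {V ι : Type*} [Fintype V]
    (C : ι → (V → ZMod 2) × ZMod 2)
    (B : Finset V) (r : V → V → ZMod 2) (p : V → ZMod 2)
    (τ : V → Option (ZMod 2))
    (hnb : ∀ b ∈ B, ∀ b' ∈ B, r b b' = 0)
    (hequiv : ∀ x : V → ZMod 2,
      (∀ i, ∑ v, (C i).1 v * x v = (C i).2) ↔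
        ∀ b ∈ B, x b = (∑ v, r b v * x v) + p b)
    (hsatur : ∀ b ∈ B, ((τ b).isSome ↔ ∀ v, r b v ≠ 0 → (τ v).isSome))
    (hcons : ∀ b ∈ B, ((τ b).isSome ∧ ∀ v, r b v ≠ 0 → (τ v).isSome) →
      (τ b).getD 0 = (∑ v, r b v * (τ v).getD 0) + p b)
    (y : V) (v : ZMod 2) :
    (∀ x : V → ZMod 2, (∀ w c, τ w = some c → x w = c) →
        (∀ i, ∑ w, (C i).1 w * x w = (C i).2) → x y = v) ↔
      τ y = some v := by
  classical
  have hext (f : V → ZMod 2) : ∀ w c, τ w = some c → canonicalExtension B r p τ f w = c :=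
    fun _ _ => canonicalExtension_eq_of_eq_some (fun b hb => (hsatur b hb).mp) hcons f
  have hsol (f : V → ZMod 2) :
      ∀ i, ∑ w, (C i).1 w * canonicalExtension B r p τ f w = (C i).2 :=
    (hequiv _).mpr (canonicalExtension_solves hnb f)
  constructor
  · intro himplied
    cases hy : τ y with
    | none =>
      obtain ⟨f, g, hne⟩ :=
        exists_canonicalExtension_ne (p := p) (fun b hb => (hsatur b hb).mpr) hy
      exact absurd ((himplied _ (hext f) (hsol f)).trans (himplied _ (hext g) (hsol g)).symm) hne
    | some c => rw [← hext 0 y c hy, himplied _ (hext 0) (hsol 0)]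
  · rintro hyv x hx -
    exact hx y v hyv
end

section
/- Let ⟨E, τ⟩ be a consistent, propagation-saturated assigned tableau for φ. If y and z are distinct τ-unassigned variables that are both non-basic in E, then φ ∧ τ does not logically imply y ⊕ z ≡ p for either parity p ∈ GF(2). -/
/-!
Give the non-basic variables the values of `τ` where it has them, `q + 1` at `y` and `0`
elsewhere (in particular at `z`), and compute each basic variable from its row of the
tableau; call the result `x`. Since no basic variable occurs on a right-hand side, `x` solves
the tableau, hence `φ`. It extends `τ`: an assigned basic variable has, by saturation, only
assigned variables on its right-hand side (so not `y`), and consistency says its row then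
reproduces its `τ`-value. Yet `x y + x z = q + 1 ≠ q`.
-/

open Finset

namespace AssignedTableau

variable {V R : Type*}

def Extends (τ : V → Option R) (x : V → R) : Prop :=
  ∀ w c, τ w = some c → x w = c

theorem extends_getD [Zero R] (τ : V → Option R) : Extends τ fun v => (τ v).getD 0 := by
  intro w c hw
  simp [hw]

theorem Extends.update [DecidableEq V] {τ : V → Option R} {g : V → R} (hg : Extends τ g)
    {y : V} (hy : τ y = none) (a : R) : Extends τ (Function.update g y a) := by
  intro w c hw
  have hwy : w ≠ y := by rintro rfl; simp [hy] at hw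
  rw [Function.update_of_ne hwy, hg w c hw]

variable [Fintype V] [DecidableEq V] [Semiring R]

def solvedExtension (B : Finset V) (r : V → V → R) (p g : V → R) : V → R :=
  fun v => if v ∈ B then ∑ w, r v w * g w + p v else g v

variable {B : Finset V} {r : V → V → R} {p g : V → R}

theorem solvedExtension_of_mem {v : V} (hv : v ∈ B) :
    solvedExtension B r p g v = ∑ w, r v w * g w + p v := if_pos hv

theorem solvedExtension_of_notMem {v : V} (hv : v ∉ B) :
    solvedExtension B r p g v = g v := if_neg hv

theorem solvedExtension_solves (hnb : ∀ b ∈ B, ∀ b' ∈ B, r b b' = 0) :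
    ∀ b ∈ B, solvedExtension B r p g b = ∑ v, r b v * solvedExtension B r p g v + p b := by
  intro b hb
  rw [solvedExtension_of_mem hb]
  congr 1
  refine sum_congr rfl fun v _ => ?_
  by_cases hv : v ∈ B
  · simp [hnb b hb v hv]
  · rw [solvedExtension_of_notMem hv]

theorem solvedExtension_extends {τ : V → Option R} (hg : Extends τ g)
    (hsatur : ∀ b ∈ B, (τ b).isSome → ∀ v, r b v ≠ 0 → (τ v).isSome)
    (hcons : ∀ b ∈ B, ((τ b).isSome ∧ ∀ v, r b v ≠ 0 → (τ v).isSome) →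
      (τ b).getD 0 = (∑ v, r b v * (τ v).getD 0) + p b) :
    Extends τ (solvedExtension B r p g) := by
  intro w c hw
  have hwSome : (τ w).isSome := by simp [hw]
  by_cases hwB : w ∈ B
  · have hrow := hsatur w hwB hwSome
    have hsum : ∑ v, r w v * g v = ∑ v, r w v * (τ v).getD 0 := by
      refine sum_congr rfl fun v _ => ?_
      by_cases hrv : r w v = 0
      · simp [hrv]
      · obtain ⟨d, hd⟩ := Option.isSome_iff_exists.mp (hrow v hrv)
        rw [hg v d hd, hd, Option.getD_some]
    rw [solvedExtension_of_mem hwB, hsum, ← hcons w hwB ⟨hwSome, hrow⟩, hw, Option.getD_some]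
  · rw [solvedExtension_of_notMem hwB, hg w c hw]

end AssignedTableau

open AssignedTableau in
/-- For a consistent, propagation-saturated assigned tableau `⟨E,τ⟩` for `φ`,
if `y` and `z` are distinct `τ`-unassigned non-basic variables, then
`φ ∧ τ` does not imply `y ⊕ z ≡ p` for any parity `p`. -/
theorem assigned_tableau_no_binary_nonbasic {V ι : Type*} [Fintype V]
    (C : ι → (V → ZMod 2) × ZMod 2)
    (B : Finset V) (r : V → V → ZMod 2) (p : V → ZMod 2)
    (τ : V → Option (ZMod 2))
    (hnb : ∀ b ∈ B, ∀ b' ∈ B, r b b' = 0)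
    (hequiv : ∀ x : V → ZMod 2,
      (∀ i, ∑ v, (C i).1 v * x v = (C i).2) ↔
        ∀ b ∈ B, x b = (∑ v, r b v * x v) + p b)
    (hsatur : ∀ b ∈ B, ((τ b).isSome ↔ ∀ v, r b v ≠ 0 → (τ v).isSome))
    (hcons : ∀ b ∈ B, ((τ b).isSome ∧ ∀ v, r b v ≠ 0 → (τ v).isSome) →
      (τ b).getD 0 = (∑ v, r b v * (τ v).getD 0) + p b)
    (y z : V) (hyz : y ≠ z) (hy : τ y = none) (hz : τ z = none)
    (hyB : y ∉ B) (hzB : z ∉ B) (q : ZMod 2) :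
    ¬ (∀ x : V → ZMod 2, (∀ w c, τ w = some c → x w = c) →
        (∀ i, ∑ w, (C i).1 w * x w = (C i).2) → x y + x z = q) := by
  classical
  intro himp
  set g := Function.update (fun v => (τ v).getD 0) y (q + 1)
  have hg : Extends τ g := (extends_getD τ).update hy (q + 1)
  have hsum := himp (solvedExtension B r p g)
    (solvedExtension_extends hg (fun b hb => (hsatur b hb).mp) hcons)
    ((hequiv _).mpr (solvedExtension_solves hnb))
  rw [solvedExtension_of_notMem hyB, solvedExtension_of_notMem hzB] at hsum
  simp [g, hyz.symm, hz] at hsum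
end

section
/- Let ⟨E, τ⟩ be a consistent, propagation-saturated assigned tableau for φ, and let y be a τ-unassigned basic variable with equation e of the form y := ... and z a τ-unassigned non-basic variable. Then φ ∧ τ logically implies y ⊕ z ≡ p if and only if substituting the τ-assigned variables in e by their values yields exactly the equation y := z ⊕ p. -/
/-!
The solutions of `φ ∧ τ` are parametrised by arbitrary values `f` of the unassigned variables:
fill the assigned ones from `τ`, keep the non-basic ones, and recompute the basic ones from
their equations. Saturation and consistency make this agree with `τ` on assigned basic
variables, and since no basic variable occurs on a right-hand side the result solves the
tableau. Along this parametrisation `y + z` equals `e|τ + f z`, an affine function of `f`,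
which is the constant `q` exactly when `e|τ` is `z + q`.
-/

open Finset

theorem Option.getD_eq_getD_zero_add {R : Type*} [AddZeroClass R] (o : Option R) (a : R) :
    o.getD a = o.getD 0 + if o = none then a else 0 := by
  cases o <;> simp

section Affine

variable {V R : Type*} [Fintype V] [CommRing R]

theorem sum_mul_getD_eq_add_sum_unassigned (τ : V → Option R) (a f : V → R) :
    ∑ w, a w * (τ w).getD (f w) =
      ∑ w, a w * (τ w).getD 0 + ∑ w, if τ w = none then a w * f w else 0 := by
  rw [← sum_add_distrib]
  refine sum_congr rfl fun w _ => ?_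
  rw [Option.getD_eq_getD_zero_add (τ w) (f w), mul_add, mul_ite, mul_zero]

theorem forall_sum_mul_getD_add_eq_iff [DecidableEq V] (τ : V → Option R) (a : V → R) (c q : R)
    {z : V} (hz : τ z = none) :
    (∀ f : V → R, ∑ w, a w * (τ w).getD (f w) + c + f z = q) ↔
      a z = -1 ∧ (∀ v, τ v = none → v ≠ z → a v = 0) ∧ ∑ w, a w * (τ w).getD 0 + c = q := by
  refine (forall_congr' fun f => by rw [sum_mul_getD_eq_add_sum_unassigned τ a f]).trans ?_
  set S := ∑ w, a w * (τ w).getD 0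
  constructor
  · intro h
    have h₀ : S + c = q := by simpa using h 0
    have hsingle : ∀ v, τ v = none → S + a v + c + (Pi.single v 1 : V → R) z = q := by
      intro v hv
      have hv_only : (∑ w, if τ w = none then a w * (Pi.single v 1 : V → R) w else 0) = a v := by
        rw [sum_eq_single v (fun w _ hwv => by simp [hwv]) (by simp), if_pos hv,
          Pi.single_eq_same, mul_one]
      simpa only [hv_only] using h (Pi.single v 1)
    refine ⟨?_, fun v hv hvz => ?_, h₀⟩
    · have hz' : S + a z + c + 1 = q := by simpa using hsingle z hz
      linear_combination hz' - h₀
    · have hv' : S + a v + c = q := by simpa [Pi.single_eq_of_ne' hvz] using hsingle v hv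
      linear_combination hv' - h₀
  · rintro ⟨haz, hunassigned, h₀⟩ f
    have hsum : (∑ w, if τ w = none then a w * f w else 0) = a z * f z := by
      refine (sum_eq_single z (fun w _ hwz => ?_) (by simp)).trans (if_pos hz)
      split_ifs with hw
      · simp [hunassigned w hw hwz]
      · rfl
    rw [hsum, haz, ← h₀]
    ring

end Affine

section Tableau

variable {V R : Type*} [Fintype V] [DecidableEq V] [CommRing R]
  (B : Finset V) (r : V → V → R) (p : V → R)

def basicExtension (g : V → R) (v : V) : R :=
  if v ∈ B then ∑ w, r v w * g w + p v else g v

variable {B r p} {τ : V → Option R}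

theorem basicExtension_of_mem (g : V → R) {v : V} (hv : v ∈ B) :
    basicExtension B r p g v = ∑ w, r v w * g w + p v :=
  if_pos hv

theorem basicExtension_of_notMem (g : V → R) {v : V} (hv : v ∉ B) :
    basicExtension B r p g v = g v :=
  if_neg hv

theorem basicExtension_solves (hnb : ∀ b ∈ B, ∀ b' ∈ B, r b b' = 0) (g : V → R) :
    ∀ b ∈ B, basicExtension B r p g b = ∑ v, r b v * basicExtension B r p g v + p b := by
  intro b hb
  rw [basicExtension_of_mem g hb]
  congr 1
  refine sum_congr rfl fun w _ => ?_
  by_cases hw : w ∈ B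
  · simp [hnb b hb w hw]
  · rw [basicExtension_of_notMem g hw]

theorem basicExtension_getD_extends
    (hsatur : ∀ b ∈ B, (τ b).isSome → ∀ v, r b v ≠ 0 → (τ v).isSome)
    (hcons : ∀ b ∈ B, (τ b).isSome → (τ b).getD 0 = ∑ v, r b v * (τ v).getD 0 + p b)
    (f : V → R) :
    ∀ w c, τ w = some c → basicExtension B r p (fun v => (τ v).getD (f v)) w = c := by
  intro w c hwc
  have hw_some : (τ w).isSome := by simp [hwc]
  by_cases hw : w ∈ B
  · rw [basicExtension_of_mem _ hw]
    have hassigned : ∀ v, r w v * (τ v).getD (f v) = r w v * (τ v).getD 0 := fun v => by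
      by_cases hrv : r w v = 0
      · simp [hrv]
      · obtain ⟨d, hd⟩ := Option.isSome_iff_exists.mp (hsatur w hw hw_some v hrv)
        simp [hd]
    simp only [hassigned, ← hcons w hw hw_some, hwc, Option.getD_some]
  · simp [basicExtension_of_notMem _ hw, hwc]

theorem entails_add_eq_iff_forall_getD
    (hnb : ∀ b ∈ B, ∀ b' ∈ B, r b b' = 0)
    (hsatur : ∀ b ∈ B, (τ b).isSome → ∀ v, r b v ≠ 0 → (τ v).isSome)
    (hcons : ∀ b ∈ B, (τ b).isSome → (τ b).getD 0 = ∑ v, r b v * (τ v).getD 0 + p b)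
    {y z : V} (hyB : y ∈ B) (hzB : z ∉ B) (hz : τ z = none) (q : R) :
    (∀ x : V → R, (∀ w c, τ w = some c → x w = c) →
        (∀ b ∈ B, x b = ∑ v, r b v * x v + p b) → x y + x z = q) ↔
      ∀ f : V → R, ∑ w, r y w * (τ w).getD (f w) + p y + f z = q := by
  constructor
  · intro h f
    have hx := h _ (basicExtension_getD_extends hsatur hcons f) (basicExtension_solves hnb _)
    rwa [basicExtension_of_mem _ hyB, basicExtension_of_notMem _ hzB, hz, Option.getD_none] at hx
  · intro h x hxτ hx
    have hfill : ∀ w, (τ w).getD (x w) = x w := fun w => by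
      cases hw : τ w
      · rfl
      · exact (hxτ w _ hw).symm
    simpa only [hfill, ← hx y hyB] using h x

end Tableau

theorem assigned_tableau_binary_basic_nonbasic_general {V ι : Type*} [Fintype V]
    (C : ι → (V → ZMod 2) × ZMod 2)
    (B : Finset V) (r : V → V → ZMod 2) (p : V → ZMod 2)
    (τ : V → Option (ZMod 2))
    (hnb : ∀ b ∈ B, ∀ b' ∈ B, r b b' = 0)
    (hequiv : ∀ x : V → ZMod 2,
      (∀ i, ∑ v, (C i).1 v * x v = (C i).2) ↔
        ∀ b ∈ B, x b = (∑ v, r b v * x v) + p b)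
    (hsatur : ∀ b ∈ B, ((τ b).isSome ↔ ∀ v, r b v ≠ 0 → (τ v).isSome))
    (hcons : ∀ b ∈ B, ((τ b).isSome ∧ ∀ v, r b v ≠ 0 → (τ v).isSome) →
      (τ b).getD 0 = (∑ v, r b v * (τ v).getD 0) + p b)
    (y z : V) (hyB : y ∈ B) (hzB : z ∉ B)
    (hz : τ z = none) (q : ZMod 2) :
    (∀ x : V → ZMod 2, (∀ w c, τ w = some c → x w = c) →
        (∀ i, ∑ w, (C i).1 w * x w = (C i).2) → x y + x z = q) ↔
      (r y z = 1 ∧ (∀ v, τ v = none → v ≠ z → r y v = 0) ∧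
        (∑ v, r y v * (τ v).getD 0) + p y = q) := by
  classical
  have hsatur' := fun b hb => (hsatur b hb).mp
  have hcons' := fun b hb hb_some => hcons b hb ⟨hb_some, hsatur' b hb hb_some⟩
  simp only [hequiv]
  rw [entails_add_eq_iff_forall_getD hnb hsatur' hcons' hyB hzB hz,
    forall_sum_mul_getD_add_eq_iff τ (r y) (p y) q hz, CharTwo.neg_eq]

/-- For a consistent, propagation-saturated assigned tableau `⟨E,τ⟩` for `φ`,
with `y` an unassigned basic variable (equation `e : y := ...`) and `z` an
unassigned non-basic variable: `φ ∧ τ ⊨ (y ⊕ z ≡ q)` iff `e|τ` is exactly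
`y := z ⊕ q`. -/
theorem assigned_tableau_binary_basic_nonbasic {V ι : Type*} [Fintype V]
    (C : ι → (V → ZMod 2) × ZMod 2)
    (B : Finset V) (r : V → V → ZMod 2) (p : V → ZMod 2)
    (τ : V → Option (ZMod 2))
    (hnb : ∀ b ∈ B, ∀ b' ∈ B, r b b' = 0)
    (hequiv : ∀ x : V → ZMod 2,
      (∀ i, ∑ v, (C i).1 v * x v = (C i).2) ↔
        ∀ b ∈ B, x b = (∑ v, r b v * x v) + p b)
    (hsatur : ∀ b ∈ B, ((τ b).isSome ↔ ∀ v, r b v ≠ 0 → (τ v).isSome))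
    (hcons : ∀ b ∈ B, ((τ b).isSome ∧ ∀ v, r b v ≠ 0 → (τ v).isSome) →
      (τ b).getD 0 = (∑ v, r b v * (τ v).getD 0) + p b)
    (y z : V) (hyB : y ∈ B) (hzB : z ∉ B)
    (hy : τ y = none) (hz : τ z = none) (q : ZMod 2) :
    (∀ x : V → ZMod 2, (∀ w c, τ w = some c → x w = c) →
        (∀ i, ∑ w, (C i).1 w * x w = (C i).2) → x y + x z = q) ↔
      (r y z = 1 ∧ (∀ v, τ v = none → v ≠ z → r y v = 0) ∧
        (∑ v, r y v * (τ v).getD 0) + p y = q) :=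
  assigned_tableau_binary_basic_nonbasic_general C B r p τ hnb hequiv hsatur hcons y z hyB hzB hz q
end

section
/- Let ⟨E, τ⟩ be a consistent, propagation-saturated assigned tableau for φ, and let y and z be distinct τ-unassigned basic variables with equations e_y : y := ... and e_z : z := ... in E. Then φ ∧ τ logically implies y ⊕ z ≡ p if and only if, after substituting the τ-assigned variables by their values, the right-hand sides f of e_y and g of e_z satisfy f ⊕ g = p (i.e., they contain the same unassigned variables and their constants differ by p). -/
/-!
Since no basic variable occurs on a right-hand side, every total extension `u` of `τ` becomes a
solution of the tableau extending `τ` once each unassigned basic variable is overwritten by the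
value of its right-hand side at `u`; saturation and consistency take care of the assigned basic
variables. So the values of `y ⊕ z` on models of `φ ∧ τ` are exactly the values of `f ⊕ g` on
arbitrary extensions of `τ`. The latter is an affine function of the unassigned variables, and it
is constantly `q` iff its linear part vanishes on them and its value with all of them set to `0`
is `q`; over `GF(2)` the linear part vanishes at `v` iff `v` has the same coefficient in `f`
and in `g`.
-/

open Finset

namespace XorTableau

variable {V R : Type*}

section Semiring

variable [Semiring R]

def Extends (x : V → R) (τ : V → Option R) : Prop :=
  ∀ w c, τ w = some c → x w = c

theorem extends_getD (τ : V → Option R) : Extends (fun v => (τ v).getD 0) τ := by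
  intro w c hw
  simp [hw]

variable [Fintype V]

def rhs (r : V → V → R) (p : V → R) (b : V) (x : V → R) : R :=
  (∑ v, r b v * x v) + p b

def IsSolution (B : Finset V) (r : V → V → R) (p : V → R) (x : V → R) : Prop :=
  ∀ b ∈ B, x b = rhs r p b x

theorem Extends.sum_mul_eq {x : V → R} {τ : V → Option R} (hx : Extends x τ) {c : V → R}
    (hc : ∀ v, τ v = none → c v = 0) : ∑ v, c v * x v = ∑ v, c v * (τ v).getD 0 := by
  refine sum_congr rfl fun v _ => ?_
  cases hv : τ v with
  | none => simp [hc v hv]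
  | some a => simp [hx v a hv]

open Classical in
noncomputable def complete (B : Finset V) (r : V → V → R) (p : V → R) (τ : V → Option R)
    (u : V → R) (v : V) : R :=
  if v ∈ B ∧ τ v = none then rhs r p v u else u v

variable {B : Finset V} {r : V → V → R} {p : V → R} {τ : V → Option R} {u : V → R} {b : V}

theorem complete_of_unassigned (hb : b ∈ B) (hτ : τ b = none) :
    complete B r p τ u b = rhs r p b u :=
  if_pos ⟨hb, hτ⟩

theorem rhs_complete (hnb : ∀ b ∈ B, ∀ b' ∈ B, r b b' = 0) (hb : b ∈ B) :
    rhs r p b (complete B r p τ u) = rhs r p b u := by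
  unfold rhs
  congr 1
  refine sum_congr rfl fun v _ => ?_
  by_cases hv : v ∈ B
  · simp [hnb b hb v hv]
  · simp [complete, hv]

theorem Extends.complete (hu : Extends u τ) : Extends (XorTableau.complete B r p τ u) τ := by
  intro w c hw
  simp [XorTableau.complete, hw, hu w c hw]

theorem Extends.isSolution_complete (hnb : ∀ b ∈ B, ∀ b' ∈ B, r b b' = 0)
    (hsatur : ∀ b ∈ B, (τ b).isSome → ∀ v, r b v ≠ 0 → (τ v).isSome)
    (hcons : ∀ b ∈ B, ((τ b).isSome ∧ ∀ v, r b v ≠ 0 → (τ v).isSome) →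
      (τ b).getD 0 = rhs r p b (fun v => (τ v).getD 0))
    (hu : Extends u τ) : IsSolution B r p (XorTableau.complete B r p τ u) := by
  intro b hb
  rw [rhs_complete hnb hb]
  cases hτ : τ b with
  | none => exact complete_of_unassigned hb hτ
  | some c =>
    have hassigned : (τ b).isSome := by simp [hτ]
    have hvars := hsatur b hb hassigned
    have hr : ∀ v, τ v = none → r b v = 0 := fun v hv => by
      by_contra hrv
      simpa [hv] using hvars v hrv
    calc XorTableau.complete B r p τ u b = c := hu.complete b c hτ
      _ = rhs r p b (fun v => (τ v).getD 0) := by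
        simpa [hτ] using hcons b hb ⟨hassigned, hvars⟩
      _ = rhs r p b u := by rw [rhs, rhs, hu.sum_mul_eq hr]

theorem forall_solution_add_eq_iff (hnb : ∀ b ∈ B, ∀ b' ∈ B, r b b' = 0)
    (hsatur : ∀ b ∈ B, (τ b).isSome → ∀ v, r b v ≠ 0 → (τ v).isSome)
    (hcons : ∀ b ∈ B, ((τ b).isSome ∧ ∀ v, r b v ≠ 0 → (τ v).isSome) →
      (τ b).getD 0 = rhs r p b (fun v => (τ v).getD 0))
    {y z : V} (hyB : y ∈ B) (hzB : z ∈ B) (hy : τ y = none) (hz : τ z = none) (q : R) :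
    (∀ x, Extends x τ → IsSolution B r p x → x y + x z = q) ↔
      ∀ u, Extends u τ → rhs r p y u + rhs r p z u = q := by
  constructor
  · intro h u hu
    rw [← complete_of_unassigned (τ := τ) hyB hy, ← complete_of_unassigned (τ := τ) hzB hz]
    exact h _ hu.complete (hu.isSolution_complete hnb hsatur hcons)
  · intro h x hx hsol
    rw [hsol y hyB, hsol z hzB]
    exact h x hx

end Semiring

theorem forall_extends_sum_mul_eq_iff [Fintype V] [Ring R] {τ : V → Option R} {c : V → R} {k : R} :
    (∀ x, Extends x τ → ∑ v, c v * x v = k) ↔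
      (∀ v, τ v = none → c v = 0) ∧ ∑ v, c v * (τ v).getD 0 = k := by
  classical
  constructor
  · intro h
    have h0 := h _ (extends_getD τ)
    refine ⟨fun v hv => ?_, h0⟩
    have hext : Extends (fun w => (τ w).getD 0 + (Pi.single v 1 : V → R) w) τ := by
      intro w a hw
      have hwv : w ≠ v := by
        rintro rfl
        simp [hv] at hw
      simp [hw, hwv]
    simpa [mul_add, sum_add_distrib, h0, Pi.single_apply] using h _ hext
  · rintro ⟨hc, hk⟩ x hx
    rw [hx.sum_mul_eq hc, hk]

end XorTableau

open XorTableau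

theorem assigned_tableau_binary_basic_basic_general {V ι : Type*} [Fintype V]
    (C : ι → (V → ZMod 2) × ZMod 2)
    (B : Finset V) (r : V → V → ZMod 2) (p : V → ZMod 2)
    (τ : V → Option (ZMod 2))
    (hnb : ∀ b ∈ B, ∀ b' ∈ B, r b b' = 0)
    (hequiv : ∀ x : V → ZMod 2,
      (∀ i, ∑ v, (C i).1 v * x v = (C i).2) ↔
        ∀ b ∈ B, x b = (∑ v, r b v * x v) + p b)
    (hsatur : ∀ b ∈ B, ((τ b).isSome ↔ ∀ v, r b v ≠ 0 → (τ v).isSome))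
    (hcons : ∀ b ∈ B, ((τ b).isSome ∧ ∀ v, r b v ≠ 0 → (τ v).isSome) →
      (τ b).getD 0 = (∑ v, r b v * (τ v).getD 0) + p b)
    (y z : V) (hyB : y ∈ B) (hzB : z ∈ B)
    (hy : τ y = none) (hz : τ z = none) (q : ZMod 2) :
    (∀ x : V → ZMod 2, (∀ w c, τ w = some c → x w = c) →
        (∀ i, ∑ w, (C i).1 w * x w = (C i).2) → x y + x z = q) ↔
      ((∀ v, τ v = none → r y v = r z v) ∧
        ((∑ v, r y v * (τ v).getD 0) + p y) +
          ((∑ v, r z v * (τ v).getD 0) + p z) = q) := by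
  have hsum : ∀ u : V → ZMod 2,
      rhs r p y u + rhs r p z u = ∑ w, (r y w + r z w) * u w + (p y + p z) := by
    intro u
    simp only [rhs, add_mul, sum_add_distrib]
    ring
  simp only [hequiv]
  calc _ ↔ ∀ u, Extends u τ → rhs r p y u + rhs r p z u = q :=
        forall_solution_add_eq_iff hnb (fun b hb => (hsatur b hb).1) hcons hyB hzB hy hz q
    _ ↔ ∀ u, Extends u τ → ∑ w, (r y w + r z w) * u w = q - (p y + p z) := by
        simp only [hsum, eq_sub_iff_add_eq]
    _ ↔ _ := forall_extends_sum_mul_eq_iff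
    _ ↔ _ := by simp only [CharTwo.add_eq_zero, eq_sub_iff_add_eq, ← hsum, rhs]

/-- For a consistent, propagation-saturated assigned tableau `⟨E,τ⟩` for `φ`,
with `y` and `z` distinct unassigned basic variables with equations
`e_y : y := ...` and `e_z : z := ...`: `φ ∧ τ ⊨ (y ⊕ z ≡ q)` iff the
`τ`-restricted right-hand sides `f` of `e_y` and `g` of `e_z` satisfy
`f ⊕ g = q` (same unassigned variables, constants differing by `q`). -/
theorem assigned_tableau_binary_basic_basic {V ι : Type*} [Fintype V]
    (C : ι → (V → ZMod 2) × ZMod 2)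
    (B : Finset V) (r : V → V → ZMod 2) (p : V → ZMod 2)
    (τ : V → Option (ZMod 2))
    (hnb : ∀ b ∈ B, ∀ b' ∈ B, r b b' = 0)
    (hequiv : ∀ x : V → ZMod 2,
      (∀ i, ∑ v, (C i).1 v * x v = (C i).2) ↔
        ∀ b ∈ B, x b = (∑ v, r b v * x v) + p b)
    (hsatur : ∀ b ∈ B, ((τ b).isSome ↔ ∀ v, r b v ≠ 0 → (τ v).isSome))
    (hcons : ∀ b ∈ B, ((τ b).isSome ∧ ∀ v, r b v ≠ 0 → (τ v).isSome) →
      (τ b).getD 0 = (∑ v, r b v * (τ v).getD 0) + p b)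
    (y z : V) (hyz : y ≠ z) (hyB : y ∈ B) (hzB : z ∈ B)
    (hy : τ y = none) (hz : τ z = none) (q : ZMod 2) :
    (∀ x : V → ZMod 2, (∀ w c, τ w = some c → x w = c) →
        (∀ i, ∑ w, (C i).1 w * x w = (C i).2) → x y + x z = q) ↔
      ((∀ v, τ v = none → r y v = r z v) ∧
        ((∑ v, r y v * (τ v).getD 0) + p y) +
          ((∑ v, r z v * (τ v).getD 0) + p z) = q) :=
  assigned_tableau_binary_basic_basic_general C B r p τ hnb hequiv hsatur hcons y z hyB hzB hy hz q
end

section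
/- Let (V_a, V_b) be an x-cut partition of a finite conjunction φ of xor-constraints, with φ_a and φ_b the conjunctions of V_a and V_b respectively. If φ together with unit constraints l_1, ..., l_k is unsatisfiable, then either φ_a ∧ l_1 ∧ ... ∧ l_k is unsatisfiable, or φ_b ∧ l_1 ∧ ... ∧ l_k is unsatisfiable, or there is a parity p ∈ GF(2) such that φ_a ∧ l_1 ∧ ... ∧ l_k implies x ≡ p and φ_b ∧ l_1 ∧ ... ∧ l_k implies x ≡ p ⊕ 1. -/
/-!
If both sides are satisfiable together with the literals, then any solution `xa` of the
`V_a`-side and any solution `xb` of the `V_b`-side must disagree at `x`: otherwise the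
assignment that follows `xa` on the variables of `V_a` and `xb` elsewhere satisfies every
constraint, since the only variable the two sides share is `x`, and it satisfies every literal,
contradicting unsatisfiability. Over `GF(2)` two values that always disagree are forced to be
`p` and `p + 1` for a single `p`.
-/

theorem ZMod.two_eq_add_one_of_ne {a b : ZMod 2} : a ≠ b → a = b + 1 := by
  revert a b; decide

section Gluing

variable {V ι R : Type*} [Fintype V] [Semiring R]

theorem Finset.sum_mul_congr_of_eqOn_support {a x y : V → R}
    (h : ∀ v, a v ≠ 0 → x v = y v) : ∑ v, a v * x v = ∑ v, a v * y v :=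
  Finset.sum_congr rfl fun v _ => by
    by_cases hv : a v = 0
    · simp [hv]
    · rw [h v hv]

theorem exists_solution_of_agree_on_cut (C : ι → (V → R) × R) (A : Set ι) (x0 : V)
    (hcut : {v | ∃ i ∈ A, (C i).1 v ≠ 0} ∩ {v | ∃ i ∈ Aᶜ, (C i).1 v ≠ 0} ⊆ {x0})
    (lits : List (V × R)) {xa xb : V → R}
    (ha : ∀ i ∈ A, ∑ v, (C i).1 v * xa v = (C i).2) (hla : ∀ l ∈ lits, xa l.1 = l.2)
    (hb : ∀ i ∈ Aᶜ, ∑ v, (C i).1 v * xb v = (C i).2) (hlb : ∀ l ∈ lits, xb l.1 = l.2)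
    (hx0 : xa x0 = xb x0) :
    ∃ x : V → R, (∀ i, ∑ v, (C i).1 v * x v = (C i).2) ∧ (∀ l ∈ lits, x l.1 = l.2) := by
  classical
  set Sa := {v | ∃ i ∈ A, (C i).1 v ≠ 0}
  refine ⟨Sa.piecewise xa xb, fun i => ?_, fun l hl => ?_⟩
  · by_cases hi : i ∈ A
    · rw [← ha i hi]
      exact Finset.sum_mul_congr_of_eqOn_support fun v hv =>
        Set.piecewise_eq_of_mem _ _ _ ⟨i, hi, hv⟩
    · rw [← hb i hi]
      refine Finset.sum_mul_congr_of_eqOn_support fun v hv => ?_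
      by_cases hva : v ∈ Sa
      · obtain rfl : v = x0 := hcut ⟨hva, i, hi, hv⟩
        rw [Set.piecewise_eq_of_mem _ _ _ hva, hx0]
      · exact Set.piecewise_eq_of_notMem _ _ _ hva
  · by_cases hva : l.1 ∈ Sa
    · rw [Set.piecewise_eq_of_mem _ _ _ hva, hla l hl]
    · rw [Set.piecewise_eq_of_notMem _ _ _ hva, hlb l hl]

end Gluing

theorem ZMod.two_exists_eq_and_eq_add_one_of_forall_ne {α β : Type*} {P : α → Prop}
    {Q : β → Prop} {f : α → ZMod 2} {g : β → ZMod 2} (hP : ∃ a, P a) (hQ : ∃ b, Q b)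
    (hne : ∀ a b, P a → Q b → f a ≠ g b) :
    ∃ p, (∀ a, P a → f a = p) ∧ (∀ b, Q b → g b = p + 1) := by
  obtain ⟨a₀, ha₀⟩ := hP
  refine ⟨f a₀, fun a ha => ?_, fun b hb => ZMod.two_eq_add_one_of_ne (hne a₀ b ha₀ hb).symm⟩
  obtain ⟨b₀, hb₀⟩ := hQ
  rw [ZMod.two_eq_add_one_of_ne (hne a b₀ ha hb₀),
    ZMod.two_eq_add_one_of_ne (hne a₀ b₀ ha₀ hb₀)]

/-- Decomposition theorem, unsatisfiable case: for an `x0`-cut partition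
`(V_a, V_b)` of `φ`, if `φ ∧ l_1 ∧ ... ∧ l_k` is unsatisfiable then one side is
unsatisfiable with the literals, or the two sides imply opposite values for `x0`. -/
theorem cut_partition_unsat {V ι : Type*} [Fintype V]
    (C : ι → (V → ZMod 2) × ZMod 2) (A : Set ι) (x0 : V)
    (hcut : {v | ∃ i ∈ A, (C i).1 v ≠ 0} ∩ {v | ∃ i ∈ Aᶜ, (C i).1 v ≠ 0} = {x0})
    (lits : List (V × ZMod 2))
    (hunsat : ¬ ∃ x : V → ZMod 2,
      (∀ i, ∑ v, (C i).1 v * x v = (C i).2) ∧ (∀ l ∈ lits, x l.1 = l.2)) :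
    (¬ ∃ x : V → ZMod 2,
        (∀ i ∈ A, ∑ v, (C i).1 v * x v = (C i).2) ∧ (∀ l ∈ lits, x l.1 = l.2)) ∨
    (¬ ∃ x : V → ZMod 2,
        (∀ i ∈ Aᶜ, ∑ v, (C i).1 v * x v = (C i).2) ∧ (∀ l ∈ lits, x l.1 = l.2)) ∨
    (∃ p : ZMod 2,
      (∀ x : V → ZMod 2, (∀ i ∈ A, ∑ v, (C i).1 v * x v = (C i).2) →
        (∀ l ∈ lits, x l.1 = l.2) → x x0 = p) ∧
      (∀ x : V → ZMod 2, (∀ i ∈ Aᶜ, ∑ v, (C i).1 v * x v = (C i).2) →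
        (∀ l ∈ lits, x l.1 = l.2) → x x0 = p + 1)) := by
  by_cases hA : ∃ x : V → ZMod 2,
      (∀ i ∈ A, ∑ v, (C i).1 v * x v = (C i).2) ∧ (∀ l ∈ lits, x l.1 = l.2)
  · by_cases hB : ∃ x : V → ZMod 2,
        (∀ i ∈ Aᶜ, ∑ v, (C i).1 v * x v = (C i).2) ∧ (∀ l ∈ lits, x l.1 = l.2)
    · refine .inr (.inr ?_)
      obtain ⟨p, hpa, hpb⟩ := ZMod.two_exists_eq_and_eq_add_one_of_forall_ne hA hB
        (f := fun x => x x0) (g := fun x => x x0)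
        fun xa xb ⟨ha, hla⟩ ⟨hb, hlb⟩ hx0 =>
          hunsat (exists_solution_of_agree_on_cut C A x0 hcut.subset lits ha hla hb hlb hx0)
      exact ⟨p, fun x ha hla => hpa x ⟨ha, hla⟩, fun x hb hlb => hpb x ⟨hb, hlb⟩⟩
    · exact .inr (.inl hB)
  · exact .inl hA
end

section
/- If a partial assignment τ makes an assigned tableau ⟨E, τ⟩ inconsistent (some equation has all variables assigned and is violated), then no total extension of τ satisfies the xor-constraint conjunction φ represented by E. -/
theorem Option.getD_eq_of_isSome_of_extends {α β : Type*} {τ : α → Option β} {x : α → β}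
    (hx : ∀ v c, τ v = some c → x v = c) {v : α} (hv : (τ v).isSome) (d : β) :
    (τ v).getD d = x v := by
  obtain ⟨c, hc⟩ := Option.isSome_iff_exists.mp hv
  rw [hc, hx v c hc, Option.getD_some]

theorem Finset.sum_mul_getD_eq_of_extends {V R : Type*} [Fintype V] [NonUnitalNonAssocSemiring R]
    {τ : V → Option R} {x : V → R} (hx : ∀ v c, τ v = some c → x v = c) (a : V → R)
    (ha : ∀ v, a v ≠ 0 → (τ v).isSome) :
    ∑ v, a v * (τ v).getD 0 = ∑ v, a v * x v := by
  refine Finset.sum_congr rfl fun v _ => ?_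
  by_cases hav : a v = 0
  · simp only [hav, zero_mul]
  · rw [Option.getD_eq_of_isSome_of_extends hx (ha v hav)]

theorem inconsistent_tableau_unsat_general {V ι : Type*} [Fintype V]
    (C : ι → (V → ZMod 2) × ZMod 2)
    (B : Finset V) (r : V → V → ZMod 2) (p : V → ZMod 2)
    (τ : V → Option (ZMod 2))
    (hequiv : ∀ x : V → ZMod 2,
      (∀ i, ∑ v, (C i).1 v * x v = (C i).2) ↔
        ∀ b ∈ B, x b = (∑ v, r b v * x v) + p b)
    (hincons : ∃ b ∈ B, (τ b).isSome ∧ (∀ v, r b v ≠ 0 → (τ v).isSome) ∧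
      (τ b).getD 0 ≠ (∑ v, r b v * (τ v).getD 0) + p b) :
    ∀ x : V → ZMod 2, (∀ v c, τ v = some c → x v = c) →
      ¬ (∀ i, ∑ v, (C i).1 v * x v = (C i).2) := by
  intro x hx hsat
  obtain ⟨b, hb, hτb, hrb, hviolated⟩ := hincons
  rw [Option.getD_eq_of_isSome_of_extends hx hτb,
    Finset.sum_mul_getD_eq_of_extends hx (r b) hrb] at hviolated
  exact hviolated ((hequiv x).mp hsat b hb)

/-- If an assigned tableau `⟨E,τ⟩` is inconsistent (some fully-assigned
equation is violated by `τ`), then no total extension of `τ` satisfies `φ`. -/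
theorem inconsistent_tableau_unsat {V ι : Type*} [Fintype V]
    (C : ι → (V → ZMod 2) × ZMod 2)
    (B : Finset V) (r : V → V → ZMod 2) (p : V → ZMod 2)
    (τ : V → Option (ZMod 2))
    (hnb : ∀ b ∈ B, ∀ b' ∈ B, r b b' = 0)
    (hequiv : ∀ x : V → ZMod 2,
      (∀ i, ∑ v, (C i).1 v * x v = (C i).2) ↔
        ∀ b ∈ B, x b = (∑ v, r b v * x v) + p b)
    (hincons : ∃ b ∈ B, (τ b).isSome ∧ (∀ v, r b v ≠ 0 → (τ v).isSome) ∧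
      (τ b).getD 0 ≠ (∑ v, r b v * (τ v).getD 0) + p b) :
    ∀ x : V → ZMod 2, (∀ v c, τ v = some c → x v = c) →
      ¬ (∀ i, ∑ v, (C i).1 v * x v = (C i).2) :=
  inconsistent_tableau_unsat_general C B r p τ hequiv hincons
end

section
/- Let ⟨E, τ⟩ be a consistent, propagation-saturated assigned tableau for φ. Then every total assignment obtained from τ by assigning arbitrary GF(2) values to the unassigned non-basic variables and then evaluating each unassigned basic variable by its equation satisfies φ; moreover, these are exactly the total assignments extending τ that satisfy φ. -/
/-!
Fix the free values `g`. Because no basic variable occurs on the right-hand side of an equation,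
the right-hand side of row `b` evaluated at the completion of `g` only sees non-basic values, which
are either assigned by `τ` or taken from `g`. An unassigned basic variable is therefore evaluated
correctly by construction; an assigned one has, by saturation, a fully assigned row, so its
equation holds by consistency. Conversely, a solution `x` extending `τ` is the completion of
`g := x`, since its basic values are forced by their equations.
-/

theorem Option.getD_eq_of_forall_eq_some {α : Type*} {o : Option α} {a : α}
    (h : ∀ c, o = some c → a = c) : o.getD a = a := by
  cases o with
  | none => rfl
  | some c => exact (h c rfl).symm

namespace AssignedTableau

variable {V R : Type*} [Fintype V] [Semiring R]

theorem sum_mul_getD_congr_of_isSome (τ : V → Option R) (s : V → R) (a a' : V → R)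
    (hs : ∀ v, s v ≠ 0 → (τ v).isSome) :
    ∑ v, s v * (τ v).getD (a v) = ∑ v, s v * (τ v).getD (a' v) := by
  refine Finset.sum_congr rfl fun v _ => ?_
  by_cases hv : s v = 0
  · simp only [hv, zero_mul]
  · rw [← Option.get_eq_getD (h := hs v hv), ← Option.get_eq_getD (h := hs v hv)]

variable [DecidableEq V]

def completion (τ : V → Option R) (B : Finset V) (r : V → V → R) (p : V → R) (g : V → R) :
    V → R :=
  fun v => (τ v).getD (if v ∈ B then (∑ w, r v w * (τ w).getD (g w)) + p v else g v)

theorem sum_mul_completion (τ : V → Option R) (B : Finset V) (r : V → V → R) (p g : V → R)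
    (s : V → R) (hs : ∀ v ∈ B, s v = 0) :
    ∑ v, s v * completion τ B r p g v = ∑ v, s v * (τ v).getD (g v) := by
  refine Finset.sum_congr rfl fun v _ => ?_
  by_cases hv : v ∈ B
  · simp only [hs v hv, zero_mul]
  · simp only [completion, if_neg hv]

theorem completion_extends (τ : V → Option R) (B : Finset V) (r : V → V → R) (p g : V → R)
    (v : V) (c : R) (hv : τ v = some c) : completion τ B r p g v = c := by
  simp only [completion, hv, Option.getD_some]

theorem completion_self {τ : V → Option R} {B : Finset V} {r : V → V → R} {p x : V → R}
    (hext : ∀ v c, τ v = some c → x v = c) (hsol : ∀ b ∈ B, x b = (∑ v, r b v * x v) + p b) :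
    completion τ B r p x = x := by
  have hx : ∀ w, (τ w).getD (x w) = x w := fun w => Option.getD_eq_of_forall_eq_some (hext w)
  funext v
  by_cases hv : v ∈ B
  · simp only [completion, if_pos hv, hx, ← hsol v hv]
  · simp only [completion, if_neg hv, hx]

theorem completion_solves {τ : V → Option R} {B : Finset V} {r : V → V → R} {p : V → R}
    (hnb : ∀ b ∈ B, ∀ b' ∈ B, r b b' = 0)
    (hsatur : ∀ b ∈ B, (τ b).isSome → ∀ v, r b v ≠ 0 → (τ v).isSome)
    (hcons : ∀ b ∈ B, ((τ b).isSome ∧ ∀ v, r b v ≠ 0 → (τ v).isSome) →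
      (τ b).getD 0 = (∑ v, r b v * (τ v).getD 0) + p b)
    (g : V → R) (b : V) (hb : b ∈ B) :
    completion τ B r p g b = (∑ v, r b v * completion τ B r p g v) + p b := by
  rw [sum_mul_completion τ B r p g (r b) (hnb b hb)]
  cases hτb : τ b with
  | none => simp only [completion, hτb, Option.getD_none, if_pos hb]
  | some c =>
    have hsome : (τ b).isSome := by simp only [hτb, Option.isSome_some]
    have hrow := hsatur b hb hsome
    have hc := hcons b hb ⟨hsome, hrow⟩
    rw [sum_mul_getD_congr_of_isSome τ (r b) (fun _ => 0) g hrow, hτb, Option.getD_some] at hc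
    rw [completion_extends τ B r p g b c hτb, hc]

end AssignedTableau

open AssignedTableau in
/-- For a consistent, propagation-saturated assigned tableau `⟨E,τ⟩` for `φ`,
the total assignments extending `τ` and satisfying `φ` are exactly those
obtained by assigning arbitrary values `g` to the unassigned non-basic
variables and evaluating each unassigned basic variable by its equation. -/
theorem assigned_tableau_extensions {V ι : Type*} [Fintype V] [DecidableEq V]
    (C : ι → (V → ZMod 2) × ZMod 2)
    (B : Finset V) (r : V → V → ZMod 2) (p : V → ZMod 2)
    (τ : V → Option (ZMod 2))
    (hnb : ∀ b ∈ B, ∀ b' ∈ B, r b b' = 0)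
    (hequiv : ∀ x : V → ZMod 2,
      (∀ i, ∑ v, (C i).1 v * x v = (C i).2) ↔
        ∀ b ∈ B, x b = (∑ v, r b v * x v) + p b)
    (hsatur : ∀ b ∈ B, ((τ b).isSome ↔ ∀ v, r b v ≠ 0 → (τ v).isSome))
    (hcons : ∀ b ∈ B, ((τ b).isSome ∧ ∀ v, r b v ≠ 0 → (τ v).isSome) →
      (τ b).getD 0 = (∑ v, r b v * (τ v).getD 0) + p b) :
    ∀ x : V → ZMod 2,
      ((∀ v c, τ v = some c → x v = c) ∧
          (∀ i, ∑ v, (C i).1 v * x v = (C i).2)) ↔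
        ∃ g : V → ZMod 2, x = fun v =>
          (τ v).getD
            (if v ∈ B then (∑ w, r v w * (τ w).getD (g w)) + p v else g v) := by
  intro x
  constructor
  · rintro ⟨hext, hsat⟩
    exact ⟨x, (completion_self hext ((hequiv x).mp hsat)).symm⟩
  · rintro ⟨g, rfl⟩
    refine ⟨completion_extends τ B r p g, (hequiv _).mpr ?_⟩
    exact completion_solves hnb (fun b hb => (hsatur b hb).mp) hcons g
end

section
/- Swapping preserves tableau equivalence: if E is a tableau for φ containing the equation x := y_1 ⊕ ... ⊕ y_k ⊕ p with y_i one of the right-hand-side variables, then the system obtained by replacing this equation with y_i := y_1 ⊕ ... ⊕ y_{i-1} ⊕ x ⊕ y_{i+1} ⊕ ... ⊕ y_k ⊕ p and substituting y_i by this right-hand side in all other equations is again logically equivalent to φ (as a conjunction of xor-constraints). -/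
/-!
Over a ring of characteristic two, `x b = r b ⬝ᵥ x + p b` with `r b b = 0` and `r b c = 1` is
equivalent to the equation solved for `c`, since in characteristic two `x b` and `x c` may be
moved across the equals sign freely. Once that equation holds, replacing `x c` by its solution in any other
row adds `r b' c` times a quantity that vanishes, so the two systems have the same solutions.
-/

open Matrix

namespace Tableau

variable {V R : Type*} [DecidableEq V] [CommRing R]

/-- Right-hand side of `c := …` obtained by solving `b := … ⊕ c ⊕ …` for `c`. -/
def pivotRow (r : V → V → R) (b c : V) : V → R :=
  fun v => if v = b then 1 else if v = c then 0 else r b v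

/-- The coefficients after the swap: the pivot row for `c`, and the pivot row substituted
for `c` in every other row. -/
def swapCoeff (r : V → V → R) (b c : V) (b' v : V) : R :=
  if b' = c then pivotRow r b c v
  else (if v = c then 0 else r b' v) + r b' c * pivotRow r b c v

def swapConst (r : V → V → R) (p : V → R) (b c : V) (b' : V) : R :=
  if b' = c then p b else p b' + r b' c * p b

variable [CharP R 2] {r : V → V → R} {b c : V}

theorem pivotRow_eq (hbb : r b b = 0) (hbc : r b c = 1) (hne : b ≠ c) :
    pivotRow r b c = r b + Pi.single b 1 + Pi.single c 1 := by
  funext v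
  by_cases hvb : v = b
  · subst hvb
    simp [pivotRow, hbb, hne]
  · by_cases hvc : v = c
    · subst hvc
      simp [pivotRow, hvb, hbc, CharTwo.add_self_eq_zero]
    · simp [pivotRow, hvb, hvc]

theorem swapCoeff_of_ne {b' : V} (hbb : r b b = 0) (hbc : r b c = 1) (hne : b ≠ c)
    (hb'c : b' ≠ c) :
    swapCoeff r b c b' = r b' + r b' c • (r b + Pi.single b 1) := by
  funext v
  by_cases hvb : v = b
  · subst hvb
    simp [swapCoeff, pivotRow, hb'c, hne, hbb]
  · by_cases hvc : v = c
    · subst hvc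
      simp [swapCoeff, pivotRow, hb'c, hvb, hbc, CharTwo.add_self_eq_zero]
    · simp [swapCoeff, pivotRow, hb'c, hvb, hvc]

variable [Fintype V]

def Satisfies (B : Finset V) (r : V → V → R) (p : V → R) (x : V → R) : Prop :=
  ∀ b ∈ B, x b = r b ⬝ᵥ x + p b

theorem pivotRow_dotProduct (hbb : r b b = 0) (hbc : r b c = 1) (hne : b ≠ c) (x : V → R) :
    pivotRow r b c ⬝ᵥ x = x b + x c + r b ⬝ᵥ x := by
  rw [pivotRow_eq hbb hbc hne, add_dotProduct, add_dotProduct, single_dotProduct,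
    single_dotProduct]
  ring

theorem swapCoeff_dotProduct_of_ne {b' : V} (hbb : r b b = 0) (hbc : r b c = 1) (hne : b ≠ c)
    (hb'c : b' ≠ c) (x : V → R) :
    swapCoeff r b c b' ⬝ᵥ x = r b' ⬝ᵥ x + r b' c * (x b + r b ⬝ᵥ x) := by
  rw [swapCoeff_of_ne hbb hbc hne hb'c, add_dotProduct, smul_dotProduct, add_dotProduct,
    single_dotProduct, smul_eq_mul]
  ring

theorem pivot_equation_iff (hbb : r b b = 0) (hbc : r b c = 1) (hne : b ≠ c) (p : R)
    (x : V → R) :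
    x c = pivotRow r b c ⬝ᵥ x + p ↔ x b = r b ⬝ᵥ x + p := by
  rw [pivotRow_dotProduct hbb hbc hne]
  constructor <;> intro h <;>
    linear_combination -h - (r b ⬝ᵥ x + p) * CharTwo.two_eq_zero (R := R)

theorem substituted_equation_iff {p : V → R} {x : V → R} {b' : V} (hbb : r b b = 0)
    (hbc : r b c = 1) (hne : b ≠ c) (hb'c : b' ≠ c) (hxb : x b = r b ⬝ᵥ x + p b) :
    x b' = swapCoeff r b c b' ⬝ᵥ x + swapConst r p b c b' ↔ x b' = r b' ⬝ᵥ x + p b' := by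
  rw [swapCoeff_dotProduct_of_ne hbb hbc hne hb'c, swapConst, if_neg hb'c]
  have hzero : r b' c * (x b + r b ⬝ᵥ x + p b) = 0 := by
    linear_combination r b' c * hxb + r b' c * (r b ⬝ᵥ x + p b) * CharTwo.two_eq_zero (R := R)
  exact ⟨fun h => by linear_combination h + hzero, fun h => by linear_combination h - hzero⟩

theorem satisfies_swap_iff {B : Finset V} {p : V → R} (hb : b ∈ B) (hcB : c ∉ B)
    (hbb : r b b = 0) (hbc : r b c = 1) (x : V → R) :
    Satisfies (insert c (B.erase b)) (swapCoeff r b c) (swapConst r p b c) x ↔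
      Satisfies B r p x := by
  have hne : b ≠ c := ne_of_mem_of_not_mem hb hcB
  have hpivot :
      x c = swapCoeff r b c c ⬝ᵥ x + swapConst r p b c c ↔ x b = r b ⬝ᵥ x + p b := by
    rw [show swapCoeff r b c c = pivotRow r b c from funext fun _ => if_pos rfl, swapConst,
      if_pos rfl]
    exact pivot_equation_iff hbb hbc hne (p b) x
  have hne_c : ∀ b' ∈ B.erase b, b' ≠ c := fun b' hb' h =>
    hcB (h ▸ Finset.mem_of_mem_erase hb')
  simp only [Satisfies, Finset.forall_mem_insert]
  constructor
  · rintro ⟨hxc, hothers⟩ b' hb'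
    have hxb := hpivot.mp hxc
    by_cases hb'b : b' = b
    · exact hb'b ▸ hxb
    · have hb'_erase := Finset.mem_erase.mpr ⟨hb'b, hb'⟩
      exact (substituted_equation_iff hbb hbc hne (hne_c b' hb'_erase) hxb).mp
        (hothers b' hb'_erase)
  · intro h
    have hxb := h b hb
    exact ⟨hpivot.mpr hxb, fun b' hb' => (substituted_equation_iff hbb hbc hne (hne_c b' hb')
      hxb).mpr (h b' (Finset.mem_of_mem_erase hb'))⟩

end Tableau

/-- Swapping a basic variable `b` with a right-hand-side variable `c` preserves
logical equivalence of the tableau with `φ`. -/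
theorem tableau_swap_equiv {V ι : Type*} [Fintype V] [DecidableEq V]
    (C : ι → (V → ZMod 2) × ZMod 2)
    (B : Finset V) (r : V → V → ZMod 2) (p : V → ZMod 2)
    (hnb : ∀ b ∈ B, ∀ b' ∈ B, r b b' = 0)
    (hequiv : ∀ x : V → ZMod 2,
      (∀ i, ∑ v, (C i).1 v * x v = (C i).2) ↔
        ∀ b ∈ B, x b = (∑ v, r b v * x v) + p b)
    (b : V) (hb : b ∈ B) (c : V) (hc : r b c = 1) :
    ∀ x : V → ZMod 2,
      (∀ i, ∑ v, (C i).1 v * x v = (C i).2) ↔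
        ∀ b' ∈ insert c (B.erase b),
          x b' =
            (∑ v, (if b' = c then
                     (if v = b then 1 else if v = c then 0 else r b v)
                   else
                     (if v = c then 0 else r b' v) +
                       r b' c * (if v = b then 1 else if v = c then 0 else r b v))
                  * x v)
              + (if b' = c then p b else p b' + r b' c * p b) := by
  intro x
  have hcB : c ∉ B := fun hcB => by simpa [hc] using hnb b hb c hcB
  exact (hequiv x).trans (Tableau.satisfies_swap_iff hb hcB (hnb b hb b hb) hc x).symm
end
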